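/- arXiv:1603.01467 — 4 statements merged into one kernel-verified Lean document; each statement's English description precedes it below -/
import Mathlib

section
/- Let μ be a doubling measure on ℝ^d whose topological support J is hyperplane diffuse. Then μ is absolutely decaying: there exist C, α, r₀ > 0 such that for all x ∈ J, 0 < r ≤ r₀, β > 0, and every affine hyperplane L ⊆ ℝ^d, one has μ(N(L, βr) ∩ B(x,r)) ≤ C·β^α·μ(B(x,r)). -/
/-!
Put `ε = γ / 16` and choose `m` with `2ᵐ ε ≥ 2`. Take a scale `δ ≤ 1` and cover the points of `J`
in the `ε δ`-neighbourhood of `S` (inside a ball) by the balls of radius `δ` around a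
`δ`-separated net. Diffuseness puts, next to each net point, a ball of radius `2 ε δ` inside the
`δ`-neighbourhood of `S` but off its `ε δ`-neighbourhood; these balls are disjoint and, by
doubling, each carries at least `C⁻ᵐ` times the mass of its net ball. So passing from scale `δ`
to `ε δ` keeps at most the fraction `q = Cᵐ / (Cᵐ + 1) < 1` of the mass, and iterating down to
`β ≈ εᵏ` gives decay like `β ^ α` with `α = log_ε q`.
-/

open Metric MeasureTheory NNReal ENNReal

theorem exists_finite_isSeparated_isCover_of_totallyBounded {X : Type*} [PseudoEMetricSpace X]
    {s : Set X} (hs : TotallyBounded s) {ε : ℝ≥0} (hε : ε ≠ 0) :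
    ∃ N ⊆ s, N.Finite ∧ IsSeparated ε N ∧ IsCover ε s N := by
  obtain ⟨N, -, hNfin, hN⟩ := exists_finite_isCover_of_totallyBounded (ε := ε / 2)
    (by simpa using hε) hs
  have hpack : packingNumber ε s ≠ ⊤ := by
    refine ne_top_of_le_ne_top (Set.encard_ne_top_iff.2 hNfin) ?_
    calc packingNumber ε s = packingNumber (2 * (ε / 2)) s := by rw [mul_div_cancel₀ _ two_ne_zero]
      _ ≤ externalCoveringNumber (ε / 2) s := packingNumber_two_mul_le_externalCoveringNumber _ _
      _ ≤ N.encard := hN.externalCoveringNumber_le_encard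
  exact ⟨maximalSeparatedSet ε s, maximalSeparatedSet_subset,
    Set.encard_ne_top_iff.1 (encard_maximalSeparatedSet hpack ▸ hpack),
    isSeparated_maximalSeparatedSet, isCover_maximalSeparatedSet hpack⟩

theorem MeasureTheory.Measure.support_eq_setOf_forall_measure_ball_pos {X : Type*}
    [PseudoMetricSpace X] [MeasurableSpace X] (μ : Measure X) :
    μ.support = {x | ∀ r > 0, 0 < μ (ball x r)} := by
  ext x
  exact nhds_basis_ball.mem_measureSupport

theorem measure_le_ofReal_div_mul_of_disjoint {X : Type*} [MeasurableSpace X] {μ : Measure X}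
    {A U A' : Set X} {K : ℝ≥0} (hU : MeasurableSet U) (hAU : Disjoint A U) (hA' : A ∪ U ⊆ A')
    (hA : μ A ≤ K * μ U) : μ A ≤ ENNReal.ofReal (K / (K + 1)) * μ A' := by
  have h : (K + 1 : ℝ≥0∞) * μ A ≤ K * μ A' :=
    calc (K + 1 : ℝ≥0∞) * μ A = K * μ A + μ A := by ring
      _ ≤ K * μ A + K * μ U := by gcongr
      _ = K * μ (A ∪ U) := by rw [measure_union hAU hU, mul_add]
      _ ≤ K * μ A' := by gcongr
  have hK : ENNReal.ofReal (K / (K + 1)) = K / (K + 1) := by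
    rw [ENNReal.ofReal_div_of_pos (by positivity), ENNReal.ofReal_add K.coe_nonneg zero_le_one]
    simp
  calc μ A = (K + 1 : ℝ≥0∞)⁻¹ * ((K + 1) * μ A) :=
        (ENNReal.inv_mul_cancel_left (by positivity) (by simp)).symm
    _ ≤ (K + 1 : ℝ≥0∞)⁻¹ * (K * μ A') := by gcongr
    _ = ENNReal.ofReal (K / (K + 1)) * μ A' := by rw [hK, ENNReal.div_eq_inv_mul, mul_assoc]

section Doubling

variable {X : Type*} [PseudoMetricSpace X] [MeasurableSpace X] {μ : Measure X} {J : Set X}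
  {C : ℝ≥0}

def IsDoublingOn (μ : Measure X) (J : Set X) (C : ℝ≥0) : Prop :=
  ∀ x ∈ J, ∀ r > (0 : ℝ), μ (ball x (2 * r)) ≤ C * μ (ball x r)

theorem IsDoublingOn.mono {C' : ℝ≥0} (h : IsDoublingOn μ J C) (hC : C ≤ C') :
    IsDoublingOn μ J C' :=
  fun x hx r hr => (h x hx r hr).trans (by gcongr)

theorem IsDoublingOn.measure_ball_two_pow_mul_le (h : IsDoublingOn μ J C) (m : ℕ) {x : X}
    (hx : x ∈ J) {r : ℝ} (hr : 0 < r) :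
    μ (ball x (2 ^ m * r)) ≤ C ^ m * μ (ball x r) := by
  induction m with
  | zero => simp
  | succ m ih =>
    calc μ (ball x (2 ^ (m + 1) * r)) = μ (ball x (2 * (2 ^ m * r))) := by ring_nf
      _ ≤ C * μ (ball x (2 ^ m * r)) := h x hx _ (by positivity)
      _ ≤ C * (C ^ m * μ (ball x r)) := by gcongr
      _ = C ^ (m + 1) * μ (ball x r) := by ring

end Doubling

section Diffuse

variable {X : Type*} [PseudoMetricSpace X] {J S : Set X} {γ : ℝ}

def IsDiffuseAwayFrom (J : Set X) (γ : ℝ) (S : Set X) : Prop :=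
  ∀ y ∈ J, ∀ s : ℝ, 0 < s → s ≤ 1 → ((J ∩ ball y s) \ cthickening (γ * s) S).Nonempty

theorem IsDiffuseAwayFrom.mono {γ' : ℝ} (h : IsDiffuseAwayFrom J γ S)
    (hγ : γ' ≤ γ) : IsDiffuseAwayFrom J γ' S := by
  intro y hy s hs hs1
  obtain ⟨z, hzJ, hzS⟩ := h y hy s hs hs1
  exact ⟨z, hzJ, fun hz => hzS (cthickening_mono (by gcongr) S hz)⟩

theorem disjoint_ball_cthickening_of_notMem_cthickening {z : X} {a b c : ℝ}
    (hb : 0 ≤ b) (habc : a + b ≤ c) (hz : z ∉ cthickening c S) :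
    Disjoint (ball z a) (cthickening b S) := by
  refine Set.disjoint_left.2 fun w hw hwS => hz ?_
  have ha : 0 ≤ a := dist_nonneg.trans (mem_ball.1 hw).le
  have hzw : z ∈ cthickening a (cthickening b S) :=
    mem_cthickening_of_dist_le z w a _ hwS (by rw [dist_comm]; exact (mem_ball.1 hw).le)
  exact cthickening_mono habc S (cthickening_cthickening_subset ha hb S hzw)

/-- The ball is enlarged together with the neighbourhood so that balls of radius `γ δ / 8` found
near the slice at scale `γ δ / 16` still fit inside the slice at scale `δ`. -/
def cthickeningSlice (S : Set X) (x : X) (r δ : ℝ) : Set X :=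
  cthickening δ S ∩ ball x (r + 4 * δ)

theorem cthickeningSlice_mono (S : Set X) (x : X) (r : ℝ) {δ δ' : ℝ} (h : δ ≤ δ') :
    cthickeningSlice S x r δ ⊆ cthickeningSlice S x r δ' :=
  Set.inter_subset_inter (cthickening_mono h S) (ball_subset_ball (by linarith))

theorem IsDiffuseAwayFrom.exists_ball_subset_cthickeningSlice
    (hS : IsDiffuseAwayFrom J γ S) (hγ0 : 0 < γ) (hγ : γ ≤ 1 / 2) {x y : X} {r δ : ℝ}
    (hδ0 : 0 < δ) (hδ1 : δ ≤ 1) (hyJ : y ∈ J) (hy : y ∈ cthickeningSlice S x r (γ / 16 * δ)) :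
    ∃ z ∈ J, dist z y < δ / 4 ∧ ball z (γ / 8 * δ) ⊆ cthickeningSlice S x r δ ∧
      Disjoint (ball z (γ / 8 * δ)) (cthickeningSlice S x r (γ / 16 * δ)) := by
  obtain ⟨z, ⟨hzJ, hzy⟩, hzS⟩ := hS y hyJ (δ / 4) (by positivity) (by linarith)
  have hγδ : γ * δ ≤ δ / 2 := by nlinarith
  have hγδ0 : 0 < γ * δ := by positivity
  refine ⟨z, hzJ, hzy, fun w hw => ⟨?_, ?_⟩, ?_⟩
  · have hwy : dist w y ≤ γ / 8 * δ + δ / 4 :=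
      (dist_triangle w z y).trans (add_le_add (mem_ball.1 hw).le (mem_ball.1 hzy).le)
    have := cthickening_cthickening_subset (by positivity) (by positivity) S
      (mem_cthickening_of_dist_le w y _ _ hy.1 hwy)
    exact cthickening_mono (by linarith) S this
  · rw [mem_ball]
    linarith [dist_triangle4 w z y x, mem_ball.1 hw, mem_ball.1 hzy, mem_ball.1 hy.2]
  · exact (disjoint_ball_cthickening_of_notMem_cthickening (by positivity) (by linarith)
      hzS).mono_right Set.inter_subset_left

end Diffuse

theorem pow_le_inv_mul_rpow_logb {ε q β : ℝ} (hε0 : 0 < ε) (hε1 : ε < 1) (hq0 : 0 < q)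
    (hq1 : q ≤ 1) {k : ℕ} (hβ : ε ^ (k + 1) < β) : q ^ k ≤ q⁻¹ * β ^ Real.logb ε q := by
  have h : q ^ (k + 1) ≤ β ^ Real.logb ε q :=
    calc q ^ (k + 1) = (ε ^ Real.logb ε q) ^ (k + 1) := by rw [Real.rpow_logb hε0 hε1.ne hq0]
      _ = (ε ^ (k + 1)) ^ Real.logb ε q := Real.rpow_pow_comm hε0.le _ _
      _ ≤ β ^ Real.logb ε q :=
        Real.rpow_le_rpow (by positivity) hβ.le (Real.logb_nonneg_of_base_lt_one hε0 hε1 hq0 hq1)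
  rwa [le_inv_mul_iff₀ hq0, ← pow_succ']

section Decay

variable {X : Type*} [PseudoMetricSpace X] [ProperSpace X] [MeasurableSpace X]
  [OpensMeasurableSpace X] {μ : Measure X} {J S : Set X} {C : ℝ≥0} {γ : ℝ} {m : ℕ}

theorem measure_cthickeningSlice_le (hJ : μ Jᶜ = 0) (hC : IsDoublingOn μ J C)
    (hS : IsDiffuseAwayFrom J γ S) (hγ0 : 0 < γ) (hγ : γ ≤ 1 / 2) (hm : 2 ≤ 2 ^ m * (γ / 16))
    (x : X) (r : ℝ) {δ : ℝ} (hδ0 : 0 < δ) (hδ1 : δ ≤ 1) :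
    μ (cthickeningSlice S x r (γ / 16 * δ)) ≤
      ENNReal.ofReal ((C : ℝ) ^ m / ((C : ℝ) ^ m + 1)) * μ (cthickeningSlice S x r δ) := by
  set A := cthickeningSlice S x r (γ / 16 * δ)
  have hA : TotallyBounded (A ∩ J) :=
    (isCompact_closedBall x (r + 4 * (γ / 16 * δ))).totallyBounded.subset
      fun p hp => ball_subset_closedBall hp.1.2
  obtain ⟨N, hNA, hNfin, hNsep, hNcov⟩ :=
    exists_finite_isSeparated_isCover_of_totallyBounded hA (ε := δ.toNNReal) (by simpa using hδ0)
  choose! g hgJ hgy hgsub hgdisj using fun y (hy : y ∈ N) =>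
    hS.exists_ball_subset_cthickeningSlice hγ0 hγ hδ0 hδ1 (hNA hy).2 (hNA hy).1
  have hγδ : γ * δ ≤ δ / 2 := by nlinarith
  have hdisj : N.PairwiseDisjoint fun y => ball (g y) (γ / 8 * δ) := by
    intro y hy y' hy' hne
    have hsep : ENNReal.ofReal δ < edist y y' := hNsep hy hy' hne
    rw [edist_dist, ENNReal.ofReal_lt_ofReal_iff_of_nonneg hδ0.le] at hsep
    refine ball_disjoint_ball ?_
    linarith [dist_triangle4 y (g y) (g y') y', hgy y hy, hgy y' hy', dist_comm y (g y),
      dist_comm (g y') y']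
  have hdoub : ∀ y ∈ N, μ (closedBall y δ) ≤ C ^ m * μ (ball (g y) (γ / 8 * δ)) := by
    intro y hy
    refine (measure_mono fun w hw => ?_).trans
      (hC.measure_ball_two_pow_mul_le m (hgJ y hy) (by positivity : 0 < γ / 8 * δ))
    rw [mem_ball]
    nlinarith [dist_triangle w y (g y), mem_closedBall.1 hw, hgy y hy, dist_comm y (g y)]
  have hcover : μ A ≤ (C ^ m : ℝ≥0) * μ (⋃ y ∈ N, ball (g y) (γ / 8 * δ)) :=
    calc μ A = μ (A ∩ J) := (measure_inter_conull hJ).symm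
      _ ≤ μ (⋃ y ∈ N, closedBall y δ) := by
        refine measure_mono ?_
        simpa [isCover_iff_subset_iUnion_closedBall, hδ0.le] using hNcov
      _ ≤ ∑' y : N, μ (closedBall y δ) := measure_biUnion_le μ hNfin.countable _
      _ ≤ ∑' y : N, C ^ m * μ (ball (g y) (γ / 8 * δ)) :=
        ENNReal.tsum_le_tsum fun y => hdoub y y.2
      _ = (C ^ m : ℝ≥0) * μ (⋃ y ∈ N, ball (g y) (γ / 8 * δ)) := by
        rw [ENNReal.tsum_mul_left,
          measure_biUnion hNfin.countable hdisj fun _ _ => measurableSet_ball]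
        push_cast; rfl
  have := measure_le_ofReal_div_mul_of_disjoint
    (.biUnion hNfin.countable fun _ _ => measurableSet_ball)
    (Set.disjoint_iUnion₂_right.2 fun y hy => (hgdisj y hy).symm)
    (Set.union_subset (cthickeningSlice_mono S x r (by nlinarith)) (Set.iUnion₂_subset hgsub))
    hcover
  simpa using this

theorem measure_cthickeningSlice_pow_le (hJ : μ Jᶜ = 0) (hC : IsDoublingOn μ J C)
    (hS : IsDiffuseAwayFrom J γ S) (hγ0 : 0 < γ) (hγ : γ ≤ 1 / 2) (hm : 2 ≤ 2 ^ m * (γ / 16))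
    (x : X) {r : ℝ} (hr0 : 0 < r) (hr1 : r ≤ 1) (k : ℕ) :
    μ (cthickeningSlice S x r ((γ / 16) ^ k * r)) ≤
      ENNReal.ofReal ((C : ℝ) ^ m / ((C : ℝ) ^ m + 1)) ^ k * μ (cthickeningSlice S x r r) := by
  induction k with
  | zero => simp
  | succ k ih =>
    have hδ1 : (γ / 16) ^ k * r ≤ 1 :=
      (mul_le_of_le_one_left hr0.le (pow_le_one₀ (by positivity) (by linarith))).trans hr1
    calc μ (cthickeningSlice S x r ((γ / 16) ^ (k + 1) * r))
        = μ (cthickeningSlice S x r (γ / 16 * ((γ / 16) ^ k * r))) := by ring_nf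
      _ ≤ ENNReal.ofReal ((C : ℝ) ^ m / ((C : ℝ) ^ m + 1)) *
            μ (cthickeningSlice S x r ((γ / 16) ^ k * r)) :=
        measure_cthickeningSlice_le hJ hC hS hγ0 hγ hm x r (by positivity) hδ1
      _ ≤ _ := by rw [pow_succ', mul_assoc]; gcongr

theorem exists_measure_cthickening_inter_ball_le (hJ : μ Jᶜ = 0) (hC : IsDoublingOn μ J C)
    (hC1 : 1 ≤ C) (hγ0 : 0 < γ) (hγ : γ ≤ 1 / 2) :
    ∃ K > (0 : ℝ), ∃ α > (0 : ℝ), ∀ S, IsDiffuseAwayFrom J γ S →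
      ∀ x ∈ J, ∀ r : ℝ, 0 < r → r ≤ 1 → ∀ β > (0 : ℝ),
        μ (cthickening (β * r) S ∩ ball x r) ≤ ENNReal.ofReal (K * β ^ α) * μ (ball x r) := by
  obtain ⟨m, hm⟩ := pow_unbounded_of_one_lt (2 / (γ / 16)) one_lt_two
  rw [div_lt_iff₀ (by positivity)] at hm
  have hC0 : (0 : ℝ) < C := zero_lt_one.trans_le hC1
  set q := (C : ℝ) ^ m / ((C : ℝ) ^ m + 1)
  have hq0 : 0 < q := by positivity
  have hq1 : q < 1 := (div_lt_one (by positivity)).2 (lt_add_one _)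
  have hα : 0 < Real.logb (γ / 16) q :=
    Real.logb_pos_of_base_lt_one (by positivity) (by linarith) hq0 hq1
  refine ⟨C ^ 3 * q⁻¹, by positivity, Real.logb (γ / 16) q, hα, ?_⟩
  intro S hS x hx r hr0 hr1 β hβ
  rcases le_or_gt β 1 with hβ1 | hβ1
  · obtain ⟨k, hβ_gt, hβ_le⟩ := exists_nat_pow_near_of_lt_one hβ hβ1 (by positivity : 0 < γ / 16)
      (by linarith)
    have hslice : μ (cthickeningSlice S x r r) ≤ C ^ 3 * μ (ball x r) :=
      (measure_mono (Set.inter_subset_right.trans (ball_subset_ball (by linarith)))).trans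
        (hC.measure_ball_two_pow_mul_le 3 hx hr0)
    calc μ (cthickening (β * r) S ∩ ball x r)
        ≤ μ (cthickeningSlice S x r ((γ / 16) ^ k * r)) :=
          measure_mono (Set.inter_subset_inter
            (cthickening_mono (mul_le_mul_of_nonneg_right hβ_le hr0.le) S)
            (ball_subset_ball (by linarith [(by positivity : 0 ≤ (γ / 16) ^ k * r)])))
      _ ≤ ENNReal.ofReal q ^ k * (C ^ 3 * μ (ball x r)) :=
          (measure_cthickeningSlice_pow_le hJ hC hS hγ0 hγ hm.le x hr0 hr1 k).trans
            (by gcongr)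
      _ = ENNReal.ofReal (C ^ 3 * q ^ k) * μ (ball x r) := by
          rw [ENNReal.ofReal_mul (by positivity), ENNReal.ofReal_pow hq0.le,
            ENNReal.ofReal_pow C.coe_nonneg, ENNReal.ofReal_coe_nnreal]
          ring
      _ ≤ ENNReal.ofReal (C ^ 3 * q⁻¹ * β ^ Real.logb (γ / 16) q) * μ (ball x r) := by
          rw [mul_assoc]
          gcongr
          exact pow_le_inv_mul_rpow_logb (by positivity) (by linarith) hq0 hq1.le hβ_gt
  · have hK : 1 ≤ C ^ 3 * q⁻¹ * β ^ Real.logb (γ / 16) q :=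
      one_le_mul_of_one_le_of_one_le
        (one_le_mul_of_one_le_of_one_le (one_le_pow₀ (by exact_mod_cast hC1))
          (one_le_inv_iff₀.2 ⟨hq0, hq1.le⟩))
        (Real.one_le_rpow hβ1.le hα.le)
    calc μ (cthickening (β * r) S ∩ ball x r) ≤ μ (ball x r) := measure_mono Set.inter_subset_right
      _ ≤ _ := le_mul_of_one_le_left' (ENNReal.one_le_ofReal.2 hK)

end Decay

/-- A doubling measure on `ℝ^d` whose topological support is hyperplane diffuse is
absolutely decaying. Affine hyperplanes are represented as level sets `{y | φ y = c}`
of nonzero continuous linear functionals, and `N(L, ε)` is the closed `ε`-neighborhood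
(`Metric.cthickening`). -/
theorem stmt1 {d : ℕ} (μ : Measure (EuclideanSpace ℝ (Fin d)))
    (J : Set (EuclideanSpace ℝ (Fin d)))
    (hJ : J = {x | ∀ r > 0, 0 < μ (ball x r)})
    -- μ is doubling:
    (hdoub : ∃ C : ℝ≥0, 0 < C ∧ ∀ x ∈ J, ∀ r > (0 : ℝ),
      μ (ball x (2 * r)) ≤ (C : ℝ≥0∞) * μ (ball x r))
    -- J is hyperplane diffuse:
    (hdiffuse : ∃ γ > (0 : ℝ), ∀ x ∈ J, ∀ r : ℝ, 0 < r → r ≤ 1 →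
      ∀ (φ : EuclideanSpace ℝ (Fin d) →L[ℝ] ℝ) (c : ℝ), φ ≠ 0 →
        ((J ∩ ball x r) \ cthickening (γ * r) {y | φ y = c}).Nonempty) :
    -- μ is absolutely decaying:
    ∃ C > (0 : ℝ), ∃ α > (0 : ℝ), ∃ r₀ > (0 : ℝ), ∀ x ∈ J, ∀ r : ℝ, 0 < r → r ≤ r₀ →
      ∀ β > (0 : ℝ), ∀ (φ : EuclideanSpace ℝ (Fin d) →L[ℝ] ℝ) (c : ℝ), φ ≠ 0 →
        μ (cthickening (β * r) {y | φ y = c} ∩ ball x r)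
          ≤ ENNReal.ofReal (C * Real.rpow β α) * μ (ball x r) := by
  obtain ⟨C, -, hC⟩ := hdoub
  obtain ⟨γ, hγ, hdiff⟩ := hdiffuse
  have hJ : μ Jᶜ = 0 := by
    rw [hJ, ← Measure.support_eq_setOf_forall_measure_ball_pos]
    exact Measure.measure_compl_support
  obtain ⟨K, hK, α, hα, hdecay⟩ := exists_measure_cthickening_inter_ball_le hJ
    (IsDoublingOn.mono hC (le_max_left C 1)) (le_max_right C 1) (lt_min hγ one_half_pos)
    (min_le_right γ (1 / 2))
  refine ⟨K, hK, α, hα, 1, one_pos, fun x hx r hr0 hr1 β hβ φ c hφ => ?_⟩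
  have hdiffφ : IsDiffuseAwayFrom J γ {y | φ y = c} :=
    fun y hy s hs hs1 => hdiff y hy s hs hs1 φ c hφ
  exact hdecay _ (hdiffφ.mono (min_le_left γ _)) x hx r hr0 hr1 β hβ
end

section
/- Let f : 𝔹 → 𝔹 be a proper holomorphic map of degree D of the open unit disc to itself (a Blaschke product with zeros b₁,…,b_D), and let K₂ ⊆ 𝔹 be a compact set of hyperbolic diameter at most C₁. Then every connected component K₁ of f⁻¹(K₂) has hyperbolic diameter at most C₂ = 2D·C₂' where C₂' depends only on D and C₁. More precisely, if 0 ∈ K₂ then K₁ is contained in the union of the hyperbolic balls of radius C₂' centered at the zeros b₁,…,b_D, where C₂' is the hyperbolic distance from 0 to C₁'^{1/D} and C₁' < 1 is defined by dist_𝔹(0, C₁') = C₁. -/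
/-!
If `0 ∈ K₂` and `f x ∈ K₂`, then `|f x| ≤ tanh (C₁/2)`; since `|f x|` is the product of
the pseudo-hyperbolic distances from `x` to the zeros `bᵢ`, one of them is at most
`tanh (C₁/2)^{1/D}`. So the component `K₁` is covered by the `D` closed hyperbolic balls of
radius `C₂'` about the zeros. By connectedness, two points of `K₁` are joined by a chain of
balls with distinct centres, consecutive ones meeting in `K₁`, which gives the bound `2 D C₂'`.

The triangle inequality for `hypDist` is reduced, by Möbius invariance of `pseudoDist`, to the
case where the middle point is `0`.
-/

open Metric

/-- The pseudo-hyperbolic distance `|(z-w)/(1 - w̄ z)|` on the unit disc. -/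
noncomputable def pseudoDist (z w : ℂ) : ℝ :=
  ‖(z - w) / (1 - (starRingEnd ℂ) w * z)‖

/-- Hyperbolic (Poincaré) distance on the unit disc:
`hypDist z w = 2 artanh ρ = log ((1+ρ)/(1-ρ))` where `ρ` is the pseudo-hyperbolic
distance. -/
noncomputable def hypDist (z w : ℂ) : ℝ :=
  Real.log ((1 + pseudoDist z w) / (1 - pseudoDist z w))

open ComplexConjugate

section PseudoDist

open Complex

lemma normSq_one_sub_conj_mul_sub_normSq_sub (z w : ℂ) :
    normSq (1 - conj w * z) - normSq (z - w) = (1 - normSq z) * (1 - normSq w) := by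
  simp only [normSq_apply, mul_re, mul_im, sub_re, sub_im, one_re, one_im, conj_re, conj_im]
  ring

variable {x y z w : ℂ}

lemma norm_sub_lt_norm_one_sub_conj_mul (hz : ‖z‖ < 1) (hw : ‖w‖ < 1) :
    ‖z - w‖ < ‖1 - conj w * z‖ := by
  have hz' : normSq z < 1 := by rw [← Complex.sq_norm]; nlinarith [norm_nonneg z]
  have hw' : normSq w < 1 := by rw [← Complex.sq_norm]; nlinarith [norm_nonneg w]
  rw [norm_def, norm_def]
  apply Real.sqrt_lt_sqrt (normSq_nonneg _)
  nlinarith [normSq_one_sub_conj_mul_sub_normSq_sub z w]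

lemma one_sub_conj_mul_ne_zero (hz : ‖z‖ < 1) (hw : ‖w‖ < 1) : 1 - conj w * z ≠ 0 :=
  norm_pos_iff.mp ((norm_nonneg _).trans_lt (norm_sub_lt_norm_one_sub_conj_mul hz hw))

lemma pseudoDist_nonneg (z w : ℂ) : 0 ≤ pseudoDist z w := norm_nonneg _

lemma pseudoDist_lt_one (hz : ‖z‖ < 1) (hw : ‖w‖ < 1) : pseudoDist z w < 1 := by
  rw [pseudoDist, norm_div, div_lt_one (norm_pos_iff.mpr (one_sub_conj_mul_ne_zero hz hw))]
  exact norm_sub_lt_norm_one_sub_conj_mul hz hw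

lemma norm_one_sub_conj_mul_comm (z w : ℂ) : ‖1 - conj w * z‖ = ‖1 - conj z * w‖ := by
  rw [← norm_conj]
  simp [mul_comm]

lemma pseudoDist_comm (z w : ℂ) : pseudoDist z w = pseudoDist w z := by
  rw [pseudoDist, pseudoDist, norm_div, norm_div, norm_sub_rev, norm_one_sub_conj_mul_comm]

@[simp]
lemma pseudoDist_zero_left (w : ℂ) : pseudoDist 0 w = ‖w‖ := by
  simp [pseudoDist]

/-- The disc automorphism with `pseudoDist z w = ‖mobius w z‖`. -/
noncomputable def mobius (a z : ℂ) : ℂ := (z - a) / (1 - conj a * z)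

lemma pseudoDist_mobius_mobius (hx : ‖x‖ < 1) (hy : ‖y‖ < 1) (hz : ‖z‖ < 1) :
    pseudoDist (mobius y x) (mobius y z) = pseudoDist x z := by
  have hyx := one_sub_conj_mul_ne_zero hx hy
  have hyz := one_sub_conj_mul_ne_zero hz hy
  have hzy := one_sub_conj_mul_ne_zero hy hz
  have hyx' : 1 - x * conj y ≠ 0 := mul_comm x (conj y) ▸ hyx
  have hyz' : 1 - z * conj y ≠ 0 := mul_comm z (conj y) ▸ hyz
  have hsub : mobius y x - mobius y z
      = (x - z) * (1 - conj y * y) / ((1 - x * conj y) * (1 - z * conj y)) := by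
    unfold mobius; field_simp; ring
  have hden : 1 - conj (mobius y z) * mobius y x
      = (1 - x * conj z) * (1 - conj y * y) / ((1 - conj z * y) * (1 - x * conj y)) := by
    unfold mobius; simp only [map_div₀, map_sub, map_one, map_mul, conj_conj]
    field_simp; ring
  have hyy : ‖1 - conj y * y‖ ≠ 0 := norm_ne_zero_iff.mpr (one_sub_conj_mul_ne_zero hy hy)
  rw [pseudoDist, pseudoDist, hsub, hden, mul_comm x (conj z)]
  simp only [norm_div, norm_mul]
  rw [norm_one_sub_conj_mul_comm y z, mul_comm z (conj y), mul_comm x (conj y)]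
  have := norm_ne_zero_iff.mpr hyz
  have := norm_ne_zero_iff.mpr hyx
  field_simp

lemma pseudoDist_mul_one_add_norm_mul_le (hz : ‖z‖ < 1) (hw : ‖w‖ < 1) :
    pseudoDist z w * (1 + ‖z‖ * ‖w‖) ≤ ‖z‖ + ‖w‖ := by
  set s := ‖z‖
  set t := ‖w‖
  set p := (z * conj w).re
  have hp : |p| ≤ s * t := by
    simpa only [norm_mul, norm_conj] using abs_re_le_norm (z * conj w)
  have hnum : ‖z - w‖ ^ 2 = s ^ 2 + t ^ 2 - 2 * p := by
    simp only [s, t, p, Complex.sq_norm, normSq_apply, sub_re, sub_im, mul_re, conj_re, conj_im]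
    ring
  have hden : ‖1 - conj w * z‖ ^ 2 = 1 - 2 * p + s ^ 2 * t ^ 2 := by
    simp only [s, t, p, Complex.sq_norm, normSq_apply, sub_re, sub_im, mul_re, mul_im, conj_re,
      conj_im, one_re, one_im]
    ring
  have hden_pos : 0 < ‖1 - conj w * z‖ := norm_pos_iff.mpr (one_sub_conj_mul_ne_zero hz hw)
  -- squared, the claim is `(1 - s²)(1 - t²)(p + st) ≥ 0`
  have hsq : (‖z - w‖ * (1 + s * t)) ^ 2 ≤ ((s + t) * ‖1 - conj w * z‖) ^ 2 := by
    have hs : 0 ≤ s := norm_nonneg z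
    have ht : 0 ≤ t := norm_nonneg w
    rw [mul_pow, mul_pow, hnum, hden]
    have hs' : 0 ≤ 1 - s ^ 2 := by nlinarith
    have ht' : 0 ≤ 1 - t ^ 2 := by nlinarith
    nlinarith [mul_nonneg (mul_nonneg hs' ht') (neg_le_iff_add_nonneg.mp (abs_le.mp hp).1)]
  rw [pseudoDist, norm_div, div_mul_eq_mul_div, div_le_iff₀ hden_pos]
  exact (pow_le_pow_iff_left₀ (by positivity) (by positivity) two_ne_zero).mp hsq

lemma pseudoDist_mul_one_add_mul_le (hx : ‖x‖ < 1) (hy : ‖y‖ < 1) (hz : ‖z‖ < 1) :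
    pseudoDist x z * (1 + pseudoDist x y * pseudoDist y z) ≤ pseudoDist x y + pseudoDist y z := by
  have hA : ‖mobius y x‖ = pseudoDist x y := rfl
  have hB : ‖mobius y z‖ = pseudoDist y z := pseudoDist_comm z y
  rw [← pseudoDist_mobius_mobius hx hy hz, ← hA, ← hB]
  exact pseudoDist_mul_one_add_norm_mul_le (hA ▸ pseudoDist_lt_one hx hy)
    (hB ▸ pseudoDist_lt_one hy hz)

end PseudoDist

section HypDist

open Real

variable {x y z w : ℂ}

lemma hypDist_eq_two_mul_artanh (h : pseudoDist z w ≤ 1) :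
    hypDist z w = 2 * artanh (pseudoDist z w) := by
  rw [artanh_eq_half_log ⟨by linarith [pseudoDist_nonneg z w], h⟩, hypDist]
  ring

lemma hypDist_comm (z w : ℂ) : hypDist z w = hypDist w z := by
  rw [hypDist, hypDist, pseudoDist_comm]

lemma hypDist_le_hypDist {z' w' : ℂ} (h : pseudoDist z w ≤ pseudoDist z' w')
    (h' : pseudoDist z' w' < 1) : hypDist z w ≤ hypDist z' w' := by
  rw [hypDist_eq_two_mul_artanh (h.trans h'.le), hypDist_eq_two_mul_artanh h'.le]
  gcongr
  exact artanh_le_artanh (by linarith [pseudoDist_nonneg z w]) h' h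

lemma hypDist_le_hypDist_zero_of_pseudoDist_le {r : ℝ} (hr₀ : 0 ≤ r) (hr₁ : r < 1)
    (h : pseudoDist z w ≤ r) : hypDist z w ≤ hypDist 0 r := by
  have hr : pseudoDist 0 r = r := by simp [abs_of_nonneg hr₀]
  exact hypDist_le_hypDist (h.trans hr.ge) (hr.trans_lt hr₁)

lemma norm_le_tanh_of_hypDist_le {C : ℝ} (hw : ‖w‖ < 1) (h : hypDist 0 w ≤ C) :
    ‖w‖ ≤ tanh (C / 2) := by
  have hw' : pseudoDist 0 w < 1 := by simpa using hw
  rw [hypDist_eq_two_mul_artanh hw'.le, pseudoDist_zero_left] at h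
  rw [← artanh_le_artanh_iff ⟨by linarith [norm_nonneg w], hw⟩
    ⟨neg_one_lt_tanh _, tanh_lt_one _⟩, artanh_tanh]
  linarith

lemma hypDist_triangle (hx : ‖x‖ < 1) (hy : ‖y‖ < 1) (hz : ‖z‖ < 1) :
    hypDist x z ≤ hypDist x y + hypDist y z := by
  have key := pseudoDist_mul_one_add_mul_le hx hy hz
  have h₀ := pseudoDist_lt_one hx hz
  have h₁ := pseudoDist_lt_one hx hy
  have h₂ := pseudoDist_lt_one hy hz
  have := pseudoDist_nonneg x z
  have := pseudoDist_nonneg x y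
  have := pseudoDist_nonneg y z
  rw [hypDist, hypDist, hypDist, ← log_mul (by positivity) (by positivity),
    div_mul_div_comm]
  apply log_le_log (by positivity)
  rw [div_le_div_iff₀ (by positivity) (by positivity)]
  nlinarith

end HypDist

lemma exists_le_rpow_of_prod_le {ι : Type*} [Fintype ι] [Nonempty ι] {ρ : ι → ℝ}
    (hρ : ∀ i, 0 ≤ ρ i) {c : ℝ} (h : ∏ i, ρ i ≤ c) :
    ∃ i, ρ i ≤ c ^ ((1 : ℝ) / Fintype.card ι) := by
  obtain ⟨i, hi⟩ := Finite.exists_min ρ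
  refine ⟨i, ?_⟩
  have hpow : ρ i ^ Fintype.card ι ≤ c := by
    calc ρ i ^ Fintype.card ι = ∏ _j, ρ i := by simp
      _ ≤ ∏ j, ρ j := Finset.prod_le_prod (fun _ _ => hρ i) (fun j _ => hi j)
      _ ≤ c := h
  rw [← Real.pow_rpow_inv_natCast (hρ i) (Fintype.card_ne_zero (α := ι)), one_div]
  exact Real.rpow_le_rpow (pow_nonneg (hρ i) _) hpow (by positivity)

lemma exists_pseudoDist_le_of_hypDist_prod_le {ι : Type*} [Fintype ι] [Nonempty ι]
    (b : ι → ℂ) (x : ℂ) {C : ℝ} (hfx : ‖∏ i, (x - b i) / (1 - conj (b i) * x)‖ < 1)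
    (h : hypDist 0 (∏ i, (x - b i) / (1 - conj (b i) * x)) ≤ C) :
    ∃ i, pseudoDist x (b i) ≤ Real.tanh (C / 2) ^ ((1 : ℝ) / Fintype.card ι) := by
  have hprod : ‖∏ i, (x - b i) / (1 - conj (b i) * x)‖ = ∏ i, pseudoDist x (b i) :=
    norm_prod _ _
  exact exists_le_rpow_of_prod_le (fun i => pseudoDist_nonneg x (b i))
    (hprod ▸ norm_le_tanh_of_hypDist_le hfx h)

section IntersectionGraph

variable {α ι : Type*} {K : Set α} {G : ι → Set α}

def intersectionGraph (K : Set α) (G : ι → Set α) : SimpleGraph ι :=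
  SimpleGraph.fromRel fun i j => (K ∩ G i ∩ G j).Nonempty

lemma IsPreconnected.intersectionGraph_reachable [TopologicalSpace α] [Finite ι]
    (hK : IsPreconnected K) (hG : ∀ i, IsClosed (G i)) (hKG : K ⊆ ⋃ i, G i) {i j : ι}
    {x y : α} (hx : x ∈ K ∩ G i) (hy : y ∈ K ∩ G j) :
    (intersectionGraph K G).Reachable i j := by
  set T := {k | (intersectionGraph K G).Reachable i k}
  have hcover : K ⊆ (⋃ k ∈ T, G k) ∪ ⋃ k ∈ Tᶜ, G k := by
    intro z hz
    obtain ⟨k, hk⟩ := Set.mem_iUnion.mp (hKG hz)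
    by_cases hkT : k ∈ T
    · exact Or.inl (Set.mem_biUnion hkT hk)
    · exact Or.inr (Set.mem_biUnion hkT hk)
  have hT : (K ∩ ⋃ k ∈ T, G k).Nonempty :=
    ⟨x, hx.1, Set.mem_biUnion (SimpleGraph.Reachable.refl i) hx.2⟩
  have hTc : ¬ (K ∩ ⋃ k ∈ Tᶜ, G k).Nonempty := by
    intro hTc
    obtain ⟨z, hzK, hzT, hzTc⟩ := isPreconnected_closed_iff.mp hK _ _
      ((Set.toFinite T).isClosed_biUnion fun k _ => hG k)
      ((Set.toFinite Tᶜ).isClosed_biUnion fun k _ => hG k) hcover hT hTc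
    obtain ⟨k, hkT, hzk⟩ := Set.mem_iUnion₂.mp hzT
    obtain ⟨l, hlT, hzl⟩ := Set.mem_iUnion₂.mp hzTc
    have hkl : k ≠ l := fun h => hlT (h ▸ hkT)
    exact hlT (hkT.trans (SimpleGraph.Adj.reachable ⟨hkl, Or.inl ⟨z, ⟨hzK, hzk⟩, hzl⟩⟩))
  by_contra hj
  exact hTc ⟨y, hy.1, Set.mem_biUnion hj hy.2⟩

lemma le_mul_of_intersectionGraph_walk (d : α → α → ℝ) {δ : ℝ}
    (hd : ∀ x ∈ K, ∀ y ∈ K, ∀ z ∈ K, d x z ≤ d x y + d y z)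
    (hδ : ∀ i, ∀ x ∈ K ∩ G i, ∀ y ∈ K ∩ G i, d x y ≤ δ) {i j : ι}
    (p : (intersectionGraph K G).Walk i j) :
    ∀ x ∈ K ∩ G i, ∀ y ∈ K ∩ G j, d x y ≤ (p.length + 1) * δ := by
  induction p with
  | nil => simpa using hδ _
  | @cons i k j hik p ih =>
    intro x hx y hy
    obtain ⟨z, hz, hzi, hzk⟩ : ∃ z ∈ K, z ∈ G i ∧ z ∈ G k := by
      rcases hik.2 with ⟨z, ⟨hz, hzi⟩, hzk⟩ | ⟨z, ⟨hz, hzk⟩, hzi⟩ <;>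
        exact ⟨z, hz, hzi, hzk⟩
    calc d x y ≤ d x z + d z y := hd x hx.1 z hz y hy.1
      _ ≤ δ + (p.length + 1) * δ :=
        add_le_add (hδ i x hx z ⟨hz, hzi⟩) (ih z ⟨hz, hzk⟩ y hy)
      _ = ((p.cons hik).length + 1) * δ := by
        rw [SimpleGraph.Walk.length_cons]; push_cast; ring

lemma IsPreconnected.le_card_mul_of_isClosed_cover [TopologicalSpace α] [Fintype ι]
    (hK : IsPreconnected K) (hG : ∀ i, IsClosed (G i)) (hKG : K ⊆ ⋃ i, G i)
    (d : α → α → ℝ) {δ : ℝ}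
    (hd : ∀ x ∈ K, ∀ y ∈ K, ∀ z ∈ K, d x z ≤ d x y + d y z)
    (hδ : ∀ i, ∀ x ∈ K ∩ G i, ∀ y ∈ K ∩ G i, d x y ≤ δ) :
    ∀ x ∈ K, ∀ y ∈ K, d x y ≤ Fintype.card ι * δ := by
  intro x hx y hy
  obtain ⟨i, hxi⟩ := Set.mem_iUnion.mp (hKG hx)
  obtain ⟨j, hyj⟩ := Set.mem_iUnion.mp (hKG hy)
  obtain ⟨p, hp⟩ :=
    (hK.intersectionGraph_reachable hG hKG ⟨hx, hxi⟩ ⟨hy, hyj⟩).exists_isPath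
  have hδ0 : 0 ≤ δ := by linarith [hd x hx x hx x hx, hδ i x ⟨hx, hxi⟩ x ⟨hx, hxi⟩]
  calc d x y ≤ (p.length + 1) * δ :=
        le_mul_of_intersectionGraph_walk d hd hδ p x ⟨hx, hxi⟩ y ⟨hy, hyj⟩
    _ ≤ Fintype.card ι * δ := by gcongr; exact_mod_cast hp.length_lt

end IntersectionGraph

def closedPseudoBall (b : ℂ) (r : ℝ) : Set ℂ := {x | ‖x - b‖ ≤ r * ‖1 - conj b * x‖}

lemma isClosed_closedPseudoBall (b : ℂ) (r : ℝ) : IsClosed (closedPseudoBall b r) :=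
  isClosed_le (by fun_prop) (by fun_prop)

-- `{x | pseudoDist x b ≤ r}` itself is not closed: it contains the pole `1 / conj b`,
-- where the division in `pseudoDist` returns the junk value `0`.
lemma mem_closedPseudoBall_iff {b x : ℂ} {r : ℝ} (hx : ‖x‖ < 1) (hb : ‖b‖ < 1) :
    x ∈ closedPseudoBall b r ↔ pseudoDist x b ≤ r := by
  rw [pseudoDist, norm_div, div_le_iff₀ (norm_pos_iff.mpr (one_sub_conj_mul_ne_zero hx hb))]
  rfl

lemma IsPreconnected.hypDist_le_of_forall_exists_pseudoDist_le {ι : Type*} [Fintype ι]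
    {K : Set ℂ} (hK : IsPreconnected K) (hKdisc : ∀ x ∈ K, ‖x‖ < 1) {b : ι → ℂ}
    (hb : ∀ i, ‖b i‖ < 1) {r : ℝ} (hr₀ : 0 ≤ r) (hr₁ : r < 1)
    (hnear : ∀ x ∈ K, ∃ i, pseudoDist x (b i) ≤ r) :
    ∀ x ∈ K, ∀ y ∈ K, hypDist x y ≤ 2 * Fintype.card ι * hypDist 0 r := by
  have hmem {x : ℂ} (hx : x ∈ K) (i : ι) :=
    mem_closedPseudoBall_iff (r := r) (hKdisc x hx) (hb i)
  have hball (i : ι) :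
      ∀ x ∈ K ∩ closedPseudoBall (b i) r, ∀ y ∈ K ∩ closedPseudoBall (b i) r,
        hypDist x y ≤ 2 * hypDist 0 r := by
    rintro x ⟨hx, hxi⟩ y ⟨hy, hyi⟩
    calc hypDist x y ≤ hypDist x (b i) + hypDist (b i) y :=
          hypDist_triangle (hKdisc x hx) (hb i) (hKdisc y hy)
      _ ≤ hypDist 0 r + hypDist 0 r := by
          rw [hypDist_comm (b i)]
          exact add_le_add
            (hypDist_le_hypDist_zero_of_pseudoDist_le hr₀ hr₁ ((hmem hx i).mp hxi))
            (hypDist_le_hypDist_zero_of_pseudoDist_le hr₀ hr₁ ((hmem hy i).mp hyi))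
      _ = 2 * hypDist 0 r := by ring
  intro x hx y hy
  calc hypDist x y ≤ Fintype.card ι * (2 * hypDist 0 r) :=
        hK.le_card_mul_of_isClosed_cover (fun i => isClosed_closedPseudoBall (b i) r)
          (fun x hx => Set.mem_iUnion.mpr ((hnear x hx).imp fun i => (hmem hx i).mpr)) hypDist
          (fun x hx y hy z hz => hypDist_triangle (hKdisc x hx) (hKdisc y hy) (hKdisc z hz))
          hball x hx y hy
    _ = 2 * Fintype.card ι * hypDist 0 r := by ring

theorem stmt4_general (D : ℕ) (hD : 0 < D) (b : Fin D → ℂ) (hb : ∀ i, b i ∈ ball (0 : ℂ) 1)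
    (f : ℂ → ℂ)
    (hf : ∀ x, f x = ∏ i, (x - b i) / (1 - (starRingEnd ℂ) (b i) * x))
    (C₁ : ℝ)
    (K₂ : Set ℂ) (hK₂b : K₂ ⊆ ball (0 : ℂ) 1)
    (h0 : (0 : ℂ) ∈ K₂)
    (hdiam : ∀ z ∈ K₂, ∀ w ∈ K₂, hypDist z w ≤ C₁)
    (K₁ : Set ℂ) (x₀ : ℂ)
    (hK₁ : K₁ = connectedComponentIn (ball (0 : ℂ) 1 ∩ f ⁻¹' K₂) x₀) :
    (∀ x ∈ K₁, ∃ i,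
      hypDist x (b i) ≤ hypDist 0 ((Real.tanh (C₁ / 2) ^ ((1 : ℝ) / D) : ℝ) : ℂ)) ∧
    (∀ x ∈ K₁, ∀ y ∈ K₁,
      hypDist x y ≤ 2 * D * hypDist 0 ((Real.tanh (C₁ / 2) ^ ((1 : ℝ) / D) : ℝ) : ℂ)) := by
  have : Nonempty (Fin D) := Fin.pos_iff_nonempty.mp hD
  have hc : 0 ≤ Real.tanh (C₁ / 2) := by
    simpa using norm_le_tanh_of_hypDist_le (w := 0) (by simp) (hdiam 0 h0 0 h0)
  set r := Real.tanh (C₁ / 2) ^ ((1 : ℝ) / D)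
  have hr₀ : 0 ≤ r := Real.rpow_nonneg hc _
  have hr₁ : r < 1 := Real.rpow_lt_one hc (Real.tanh_lt_one _) (by positivity)
  have hK₁sub : K₁ ⊆ ball 0 1 ∩ f ⁻¹' K₂ := hK₁ ▸ connectedComponentIn_subset _ _
  have hnear : ∀ x ∈ K₁, ∃ i, pseudoDist x (b i) ≤ r := by
    intro x hx
    have hfx : f x ∈ K₂ := (hK₁sub hx).2
    rw [hf] at hfx
    simpa only [Fintype.card_fin] using exists_pseudoDist_le_of_hypDist_prod_le b x
      (mem_ball_zero_iff.mp (hK₂b hfx)) (hypDist_comm _ _ ▸ hdiam _ hfx 0 h0)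
  refine ⟨fun x hx => (hnear x hx).imp fun i =>
    hypDist_le_hypDist_zero_of_pseudoDist_le hr₀ hr₁, ?_⟩
  have hK₁conn : IsPreconnected K₁ := hK₁ ▸ isPreconnected_connectedComponentIn
  simpa only [Fintype.card_fin] using hK₁conn.hypDist_le_of_forall_exists_pseudoDist_le
      (fun x hx => mem_ball_zero_iff.mp (hK₁sub hx).1) (fun i => mem_ball_zero_iff.mp (hb i))
      hr₀ hr₁ hnear

/-- Let `f` be a finite Blaschke product of degree `D` with zeros `b₁,…,b_D` (a proper
holomorphic self-map of the unit disc of degree `D`), and let `K₂ ⊆ 𝔹` be a compact set of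
hyperbolic diameter at most `C₁` with `0 ∈ K₂`.  Then any connected component `K₁` of
`f⁻¹(K₂)` (inside the disc) is contained in the union of the hyperbolic balls of radius
`C₂' = dist_𝔹(0, C₁'^{1/D})` centered at the zeros `bᵢ`, where `C₁' = tanh(C₁/2) < 1` is
defined by `dist_𝔹(0, C₁') = C₁`; in particular `K₁` has hyperbolic diameter at most
`C₂ = 2·D·C₂'`. -/
theorem stmt4 (D : ℕ) (hD : 0 < D) (b : Fin D → ℂ) (hb : ∀ i, b i ∈ ball (0 : ℂ) 1)
    (f : ℂ → ℂ)
    (hf : ∀ x, f x = ∏ i, (x - b i) / (1 - (starRingEnd ℂ) (b i) * x))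
    (C₁ : ℝ) (hC₁ : 0 ≤ C₁)
    (K₂ : Set ℂ) (hK₂c : IsCompact K₂) (hK₂b : K₂ ⊆ ball (0 : ℂ) 1)
    (h0 : (0 : ℂ) ∈ K₂)
    (hdiam : ∀ z ∈ K₂, ∀ w ∈ K₂, hypDist z w ≤ C₁)
    (K₁ : Set ℂ) (x₀ : ℂ) (hx₀ : x₀ ∈ ball (0 : ℂ) 1 ∩ f ⁻¹' K₂)
    (hK₁ : K₁ = connectedComponentIn (ball (0 : ℂ) 1 ∩ f ⁻¹' K₂) x₀) :
    (∀ x ∈ K₁, ∃ i,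
      hypDist x (b i) ≤ hypDist 0 ((Real.tanh (C₁ / 2) ^ ((1 : ℝ) / D) : ℝ) : ℂ)) ∧
    (∀ x ∈ K₁, ∀ y ∈ K₁,
      hypDist x y ≤ 2 * D * hypDist 0 ((Real.tanh (C₁ / 2) ^ ((1 : ℝ) / D) : ℝ) : ℂ)) :=
  stmt4_general D hD b hb f hf C₁ K₂ hK₂b h0 hdiam K₁ x₀ hK₁
end

section
/- A geometric limit of generalized spheres in ℝ^d is a generalized sphere: if (S_n) is a sequence of generalized spheres (each either a Euclidean sphere or the union of an affine hyperplane with {∞}) in ℝ^d ∪ {∞} converging in the Hausdorff metric (on the one-point compactification) to a nonempty closed set S containing more than one point, then S is contained in a generalized sphere. -/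
/-! Normalize each hyperplane `{φₙ = cₙ}` to `{ψₙ = bₙ}` with `‖ψₙ‖ = 1`; since the hyperplane meets
the unit sphere, `|bₙ| ≤ 1`. By compactness a subsequence of `(ψₙ, bₙ)` converges to some
`(ψ, b)` with `‖ψ‖ = 1`. Every `x ∈ S` is a limit of points `yₙ ∈ Sₙ`, and passing to the limit in
`ψₙ yₙ = bₙ` gives `ψ x = b`. -/

open Metric Filter Topology

theorem Metric.exists_tendsto_of_tendsto_infEDist {α : Type*} [PseudoMetricSpace α] {x : α}
    {T : ℕ → Set α} (hT : ∀ n, (T n).Nonempty)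
    (h : Tendsto (fun n => infEDist x (T n)) atTop (𝓝 0)) :
    ∃ y : ℕ → α, (∀ n, y n ∈ T n) ∧ Tendsto y atTop (𝓝 x) := by
  have hclose : ∀ n, ∃ y ∈ T n, edist x y < infEDist x (T n) + (n : ENNReal)⁻¹ := fun n =>
    infEDist_lt_iff.1 (ENNReal.lt_add_right (infEDist_ne_top (hT n)) (by simp))
  choose y hyT hy using hclose
  refine ⟨y, hyT, tendsto_iff_edist_tendsto_0.2 ?_⟩
  have hbound : Tendsto (fun n => infEDist x (T n) + (n : ENNReal)⁻¹) atTop (𝓝 0) := by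
    simpa using h.add ENNReal.tendsto_inv_nat_nhds_zero
  exact tendsto_of_tendsto_of_tendsto_of_le_of_le tendsto_const_nhds hbound
    (fun _ => zero_le) (fun n => by rw [edist_comm]; exact (hy n).le)

theorem Metric.exists_tendsto_of_tendsto_hausdorffEDist {α : Type*} [PseudoMetricSpace α]
    {T : ℕ → Set α} {S : Set α} (hT : ∀ n, (T n).Nonempty)
    (h : Tendsto (fun n => hausdorffEDist (T n) S) atTop (𝓝 0)) {x : α} (hx : x ∈ S) :
    ∃ y : ℕ → α, (∀ n, y n ∈ T n) ∧ Tendsto y atTop (𝓝 x) := by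
  refine exists_tendsto_of_tendsto_infEDist hT
    (tendsto_of_tendsto_of_tendsto_of_le_of_le tendsto_const_nhds h (fun _ => zero_le) fun n => ?_)
  rw [hausdorffEDist_comm]
  exact infEDist_le_hausdorffEDist_of_mem hx

theorem ContinuousLinearMap.apply_eq_of_tendsto {𝕜 E F ι : Type*} [NontriviallyNormedField 𝕜]
    [NormedAddCommGroup E] [NormedSpace 𝕜 E] [NormedAddCommGroup F] [NormedSpace 𝕜 F]
    {l : Filter ι} [l.NeBot] {ψ : ι → E →L[𝕜] F} {ψ₀ : E →L[𝕜] F} {y : ι → E} {x : E}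
    {b : ι → F} {b₀ : F} (hψ : Tendsto ψ l (𝓝 ψ₀)) (hy : Tendsto y l (𝓝 x))
    (hb : Tendsto b l (𝓝 b₀)) (h : ∀ i, ψ i (y i) = b i) : ψ₀ x = b₀ := by
  have happly : Tendsto (fun i => ψ i (y i)) l (𝓝 (ψ₀ x)) :=
    (isBoundedBilinearMap_apply.continuous.tendsto (ψ₀, x)).comp (hψ.prodMk_nhds hy)
  exact tendsto_nhds_unique happly (by simpa only [h] using hb)

theorem ContinuousLinearMap.exists_norm_eq_one_setOf_apply_eq {E : Type*} [NormedAddCommGroup E]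
    [NormedSpace ℝ E] {φ : E →L[ℝ] ℝ} (hφ : φ ≠ 0) {c : ℝ}
    (hc : (sphere (0 : E) 1 ∩ {y | φ y = c}).Nonempty) :
    ∃ ψ : E →L[ℝ] ℝ, ∃ b : ℝ, ‖ψ‖ = 1 ∧ |b| ≤ 1 ∧ {y | ψ y = b} = {y | φ y = c} := by
  obtain ⟨w, hw, hwc : φ w = c⟩ := hc
  have hinv : ‖φ‖⁻¹ ≠ 0 := inv_ne_zero (norm_ne_zero_iff.2 hφ)
  have hnorm : ‖‖φ‖⁻¹ • φ‖ = 1 := by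
    rw [norm_smul, norm_inv, norm_norm, inv_mul_cancel₀ (norm_ne_zero_iff.2 hφ)]
  refine ⟨‖φ‖⁻¹ • φ, ‖φ‖⁻¹ * c, hnorm, ?_, ?_⟩
  · calc |‖φ‖⁻¹ * c| = |(‖φ‖⁻¹ • φ) w| := by simp [hwc]
      _ ≤ ‖‖φ‖⁻¹ • φ‖ * ‖w‖ := (‖φ‖⁻¹ • φ).le_opNorm w
      _ = 1 := by rw [hnorm, mem_sphere_zero_iff_norm.1 hw, one_mul]
  · ext y
    simp [mul_right_inj' hinv]

theorem stmt12_general {d : ℕ}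
    (φ : ℕ → (EuclideanSpace ℝ (Fin (d + 1)) →L[ℝ] ℝ)) (c : ℕ → ℝ)
    (hφ : ∀ n, φ n ≠ 0)
    (hne : ∀ n, (sphere (0 : EuclideanSpace ℝ (Fin (d + 1))) 1 ∩ {y | φ n y = c n}).Nonempty)
    (S : Set (EuclideanSpace ℝ (Fin (d + 1))))
    (hSsub : S ⊆ sphere (0 : EuclideanSpace ℝ (Fin (d + 1))) 1)
    (hconv : Tendsto
      (fun n => EMetric.hausdorffEdist
        (sphere (0 : EuclideanSpace ℝ (Fin (d + 1))) 1 ∩ {y | φ n y = c n}) S)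
      atTop (nhds 0)) :
    ∃ (ψ : EuclideanSpace ℝ (Fin (d + 1)) →L[ℝ] ℝ) (b : ℝ), ψ ≠ 0 ∧
      S ⊆ sphere (0 : EuclideanSpace ℝ (Fin (d + 1))) 1 ∩ {y | ψ y = b} := by
  choose ψ b hψ hb hlevel using fun n =>
    ContinuousLinearMap.exists_norm_eq_one_setOf_apply_eq (hφ n) (hne n)
  obtain ⟨⟨ψ₀, b₀⟩, ⟨hψ₀, -⟩, g, hg, hlim⟩ :=
    ((isCompact_sphere (0 : EuclideanSpace ℝ (Fin (d + 1)) →L[ℝ] ℝ) 1).prod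
      (isCompact_closedBall (0 : ℝ) 1)).tendsto_subseq (x := fun n => (ψ n, b n))
      fun n => ⟨by simpa using hψ n, by simpa using hb n⟩
  refine ⟨ψ₀, b₀, ne_of_mem_sphere hψ₀ one_ne_zero, fun x hx => ⟨hSsub hx, ?_⟩⟩
  obtain ⟨y, hyS, hyx⟩ := exists_tendsto_of_tendsto_hausdorffEDist hne hconv hx
  exact ContinuousLinearMap.apply_eq_of_tendsto ((continuous_fst.tendsto _).comp hlim)
    (hyx.comp hg.tendsto_atTop) ((continuous_snd.tendsto _).comp hlim) fun k =>
    (Set.ext_iff.1 (hlevel (g k)) (y (g k))).2 (hyS (g k)).2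

/-- A geometric limit of generalized spheres is a generalized sphere.  Under the
stereographic identification of `ℝ^d ∪ {∞}` with the unit sphere `S^d ⊆ ℝ^{d+1}`, a
generalized sphere is the intersection of `S^d` with an affine hyperplane
`{y | φ y = c}` (`φ ≠ 0`).  If the nonempty sets `S_n = S^d ∩ {y | φₙ y = cₙ}` converge
in the Hausdorff metric to a nonempty closed set `S ⊆ S^d` with more than one point, then
`S` is contained in a generalized sphere. -/
theorem stmt12 {d : ℕ}
    (φ : ℕ → (EuclideanSpace ℝ (Fin (d + 1)) →L[ℝ] ℝ)) (c : ℕ → ℝ)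
    (hφ : ∀ n, φ n ≠ 0)
    (hne : ∀ n, (sphere (0 : EuclideanSpace ℝ (Fin (d + 1))) 1 ∩ {y | φ n y = c n}).Nonempty)
    (S : Set (EuclideanSpace ℝ (Fin (d + 1))))
    (hSclosed : IsClosed S)
    (hSsub : S ⊆ sphere (0 : EuclideanSpace ℝ (Fin (d + 1))) 1)
    (hS2 : ∃ x ∈ S, ∃ y ∈ S, x ≠ y)
    (hconv : Tendsto
      (fun n => EMetric.hausdorffEdist
        (sphere (0 : EuclideanSpace ℝ (Fin (d + 1))) 1 ∩ {y | φ n y = c n}) S)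
      atTop (nhds 0)) :
    ∃ (ψ : EuclideanSpace ℝ (Fin (d + 1)) →L[ℝ] ℝ) (b : ℝ), ψ ≠ 0 ∧
      S ⊆ sphere (0 : EuclideanSpace ℝ (Fin (d + 1))) 1 ∩ {y | ψ y = b} :=
  stmt12_general φ c hφ hne S hSsub hconv
end

section
/- Let S be a symbolically irreducible conformal GDMS in ℝ^d with d ≥ 3 such that every finite subsystem S_n of an exhausting increasing sequence has all of its local limit sets J_{S_n,v} contained in a generalized sphere. Then for every vertex v, the local limit set J_{S,v} is contained in a generalized sphere. -/
open Metric

/-- A generalized sphere in `ℝ^d`: either a Euclidean sphere, or (the finite part of) a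
hyperplane together with `∞`, i.e. an affine hyperplane `{y | φ y = b}` with `φ ≠ 0`. -/
def IsGenSphere {d : ℕ} (s : Set (EuclideanSpace ℝ (Fin d))) : Prop :=
  (∃ (c : EuclideanSpace ℝ (Fin d)) (r : ℝ), 0 < r ∧ s = sphere c r) ∨
  (∃ (φ : EuclideanSpace ℝ (Fin d) →L[ℝ] ℝ) (b : ℝ), φ ≠ 0 ∧ s = {y | φ y = b})

/-!
Under the lift `x ↦ (‖x‖², x, 1)` every generalized sphere is the preimage of the kernel of a
linear functional on `ℝ × ℝ^d × ℝ`. The spans of the lifts of the increasing sets `J_{S_n,v}`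
form an increasing chain of subspaces of a finite-dimensional space, so they stabilize at some
`N`; a generalized sphere containing `J_{S_N,v}` then contains the lift-span of every
`J_{S_n,v}`, hence all of them. Being closed, it contains the closure of their union, and so
`J_{S,v}`.
-/

/-- Take `N` where the chain of spans of the `m '' A n` stabilizes. -/
theorem Monotone.exists_forall_iUnion_subset_preimage_of_subset (R : Type*) {M X : Type*}
    [Semiring R] [AddCommMonoid M] [Module R M] [IsNoetherian R M]
    {A : ℕ → Set X} (hA : Monotone A) (m : X → M) :
    ∃ N, ∀ K : Submodule R M, A N ⊆ m ⁻¹' K → ⋃ n, A n ⊆ m ⁻¹' K := by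
  let spans : ℕ →o Submodule R M :=
    ⟨fun n => Submodule.span R (m '' A n),
      fun _ _ h => Submodule.span_mono (Set.image_mono (hA h))⟩
  obtain ⟨N, hN⟩ := monotone_stabilizes_iff_noetherian.mpr inferInstance spans
  refine ⟨N, fun K hK => Set.iUnion_subset fun n x hx => ?_⟩
  have hspan : spans (max n N) ≤ K := by
    rw [← hN _ (le_max_right n N)]
    exact Submodule.span_le.mpr (Set.image_subset_iff.mpr hK)
  exact hspan (Submodule.subset_span ⟨x, hA (le_max_left n N) hx, rfl⟩)

section ParaboloidLift

variable {E : Type*} [NormedAddCommGroup E] [InnerProductSpace ℝ E]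

def paraboloidLift (x : E) : ℝ × E × ℝ := (‖x‖ ^ 2, x, 1)

theorem paraboloidLift_mem_ker_coprod_iff (x : E) (a b : ℝ) (φ : E →ₗ[ℝ] ℝ) :
    paraboloidLift x ∈ LinearMap.ker ((a • LinearMap.id).coprod (φ.coprod (b • LinearMap.id))) ↔
      a * ‖x‖ ^ 2 + φ x + b = 0 := by
  simp [paraboloidLift, add_assoc]

theorem exists_sphere_eq_preimage_ker (c : E) {r : ℝ} (hr : 0 ≤ r) :
    ∃ f : (ℝ × E × ℝ) →ₗ[ℝ] ℝ, sphere c r = paraboloidLift ⁻¹' LinearMap.ker f := by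
  refine ⟨((1 : ℝ) • LinearMap.id).coprod
    (((-2 : ℝ) • innerₗ E c).coprod ((‖c‖ ^ 2 - r ^ 2) • LinearMap.id)), ?_⟩
  ext x
  rw [Set.mem_preimage, SetLike.mem_coe, paraboloidLift_mem_ker_coprod_iff, mem_sphere,
    dist_eq_norm, ← sq_eq_sq₀ (norm_nonneg _) hr, norm_sub_sq_real]
  simp only [LinearMap.smul_apply, innerₗ_apply_apply, smul_eq_mul, real_inner_comm c x]
  constructor <;> intro h <;> linarith

theorem exists_setOf_eq_eq_preimage_ker (φ : E →ₗ[ℝ] ℝ) (b : ℝ) :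
    ∃ f : (ℝ × E × ℝ) →ₗ[ℝ] ℝ, {y | φ y = b} = paraboloidLift ⁻¹' LinearMap.ker f := by
  refine ⟨((0 : ℝ) • LinearMap.id).coprod (φ.coprod (-b • LinearMap.id)), ?_⟩
  ext x
  rw [Set.mem_preimage, SetLike.mem_coe, paraboloidLift_mem_ker_coprod_iff, Set.mem_ofPred_eq]
  constructor <;> intro h <;> linarith

end ParaboloidLift

namespace IsGenSphere

variable {d : ℕ} {s : Set (EuclideanSpace ℝ (Fin d))}

theorem exists_eq_preimage_ker (hs : IsGenSphere s) :
    ∃ f : (ℝ × EuclideanSpace ℝ (Fin d) × ℝ) →ₗ[ℝ] ℝ, s = paraboloidLift ⁻¹' LinearMap.ker f := by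
  rcases hs with ⟨c, r, hr, rfl⟩ | ⟨φ, b, -, rfl⟩
  · exact exists_sphere_eq_preimage_ker c hr.le
  · exact exists_setOf_eq_eq_preimage_ker (φ : EuclideanSpace ℝ (Fin d) →ₗ[ℝ] ℝ) b

theorem isClosed (hs : IsGenSphere s) : IsClosed s := by
  rcases hs with ⟨c, r, -, rfl⟩ | ⟨φ, b, -, rfl⟩
  · exact isClosed_sphere
  · exact isClosed_eq φ.continuous continuous_const

end IsGenSphere

theorem stmt14_general {d : ℕ} {V : Type*}
    (Jloc : V → Set (EuclideanSpace ℝ (Fin d)))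
    (Jn : ℕ → V → Set (EuclideanSpace ℝ (Fin d)))
    (hmono : ∀ v, Monotone (fun n => Jn n v))
    (hclos : ∀ v, Jloc v ⊆ closure (⋃ n, Jn n v))
    (hsph : ∀ n v, ∃ s, IsGenSphere s ∧ Jn n v ⊆ s) :
    ∀ v, ∃ s, IsGenSphere s ∧ Jloc v ⊆ s := by
  intro v
  obtain ⟨N, hN⟩ :=
    (hmono v).exists_forall_iUnion_subset_preimage_of_subset ℝ paraboloidLift
  obtain ⟨s, hs, hJs⟩ := hsph N v
  obtain ⟨f, hsf⟩ := hs.exists_eq_preimage_ker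
  have hUs : ⋃ n, Jn n v ⊆ s := hsf ▸ hN _ (hsf ▸ hJs)
  exact ⟨s, hs, (hclos v).trans (closure_minimal hUs hs.isClosed)⟩

/-- Let `S` be a symbolically irreducible conformal GDMS in `ℝ^d`, `d ≥ 3`, exhausted by an
increasing sequence of finite subsystems `S_n` whose local limit sets `J_{S_n,v}` are each
contained in a generalized sphere.  Since `J_{S,v} ⊆ closure (⋃ n, J_{S_n,v})`, every local
limit set `J_{S,v}` of `S` is contained in a generalized sphere. -/
theorem stmt14 {d : ℕ} (hd : 3 ≤ d) {V : Type*}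
    (Jloc : V → Set (EuclideanSpace ℝ (Fin d)))
    (Jn : ℕ → V → Set (EuclideanSpace ℝ (Fin d)))
    (hmono : ∀ v, Monotone (fun n => Jn n v))
    (hclos : ∀ v, Jloc v ⊆ closure (⋃ n, Jn n v))
    (hsph : ∀ n v, ∃ s, IsGenSphere s ∧ Jn n v ⊆ s) :
    ∀ v, ∃ s, IsGenSphere s ∧ Jloc v ⊆ s :=
  stmt14_general Jloc Jn hmono hclos hsph
end
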